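/- arXiv:math/0402295 — 2 statements merged into one kernel-verified Lean document; each statement's English description precedes it below -/
import Mathlib

section
/- For the Hopf map ψ and the horizontal vector fields X₂(x) = (1/√2)(−x³,x⁴,x¹,−x²), X₃(x) = (1/√2)(−x⁴,−x³,x²,x¹), the images dψₓ(X₂(x)) and dψₓ(X₃(x)) form an orthonormal basis of the tangent space of S²(1/√2) at ψ(x), for every x ∈ S³(√2). -/
open scoped BigOperators

/-- The Hopf map as a polynomial map ℝ⁴ → ℝ³. -/
noncomputable def hopf (x : Fin 4 → ℝ) : Fin 3 → ℝ :=
  (1 / (2 * Real.sqrt 2)) •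
    ![2 * x 0 * x 2 + 2 * x 1 * x 3,
      2 * x 1 * x 2 - 2 * x 0 * x 3,
      x 0 ^ 2 + x 1 ^ 2 - x 2 ^ 2 - x 3 ^ 2]

noncomputable def X₂ (x : Fin 4 → ℝ) : Fin 4 → ℝ :=
  (Real.sqrt 2)⁻¹ • ![-(x 2), x 3, x 0, -(x 1)]

noncomputable def X₃ (x : Fin 4 → ℝ) : Fin 4 → ℝ :=
  (Real.sqrt 2)⁻¹ • ![-(x 3), -(x 2), x 1, x 0]

/-!
The vectors `dψₓ(X₂ x)`, `dψₓ(X₃ x)` and `√2 ψ(x)` have components quadratic in `x`; they are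
pairwise orthogonal and each has squared length `(|x|² / 2)²`, by polynomial identities valid on
all of `ℝ⁴`. On `S³(√2)` they therefore form an orthonormal frame of `ℝ³`, and a square matrix
with orthonormal rows also has orthonormal columns, so every `v` expands as `∑ (eᵢ ⬝ v) eᵢ`;
for `v ⊥ ψ(x)` the third coefficient vanishes.
-/

namespace Matrix

theorem eq_sum_dotProduct_smul_of_orthonormal {R n : Type*} [CommRing R] [Fintype n]
    [DecidableEq n] (e : n → n → R) (he : ∀ i j, e i ⬝ᵥ e j = if i = j then 1 else 0)
    (v : n → R) : v = ∑ i, (e i ⬝ᵥ v) • e i := by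
  have hrows : of e * (of e)ᵀ = 1 := by
    ext i j
    simpa [mul_apply, one_apply, dotProduct] using he i j
  have hcols : (of e)ᵀ * of e = 1 := mul_eq_one_comm.mp hrows
  calc v = ((of e)ᵀ * of e) *ᵥ v := by rw [hcols, one_mulVec]
    _ = ∑ i, (e i ⬝ᵥ v) • e i := by
      rw [← mulVec_mulVec, mulVec_transpose, vecMul_eq_sum]
      rfl

end Matrix

lemma differentiableAt_hopf_apply (x : Fin 4 → ℝ) (i : Fin 3) :
    DifferentiableAt ℝ (fun y => hopf y i) x := by
  unfold hopf; fin_cases i <;> simp <;> fun_prop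

lemma fderiv_hopf_apply (x v : Fin 4 → ℝ) : fderiv ℝ hopf x v = (Real.sqrt 2)⁻¹ •
    ![v 0 * x 2 + x 0 * v 2 + v 1 * x 3 + x 1 * v 3,
      v 1 * x 2 + x 1 * v 2 - v 0 * x 3 - x 0 * v 3,
      x 0 * v 0 + x 1 * v 1 - x 2 * v 2 - x 3 * v 3] := by
  have hproj (j : Fin 4) : fderiv ℝ (fun y : Fin 4 → ℝ => y j) x = ContinuousLinearMap.proj j :=
    (hasFDerivAt_apply j x).fderiv
  ext i
  rw [fderiv_pi (differentiableAt_hopf_apply x)]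
  fin_cases i <;>
    simp (disch := fun_prop) [hopf, hproj, fderiv_fun_mul, fderiv_fun_add, fderiv_fun_sub,
      fderiv_fun_pow] <;>
    field_simp <;> ring

lemma fderiv_hopf_X₂ (x : Fin 4 → ℝ) :
    fderiv ℝ hopf x (X₂ x) = ![(x 0 ^ 2 - x 1 ^ 2 - x 2 ^ 2 + x 3 ^ 2) / 2, x 0 * x 1 + x 2 * x 3,
      x 1 * x 3 - x 0 * x 2] := by
  ext i; fin_cases i <;> simp [fderiv_hopf_apply, X₂] <;> field_simp <;> simp <;> ring

lemma fderiv_hopf_X₃ (x : Fin 4 → ℝ) :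
    fderiv ℝ hopf x (X₃ x) = ![x 0 * x 1 - x 2 * x 3, (-x 0 ^ 2 + x 1 ^ 2 - x 2 ^ 2 + x 3 ^ 2) / 2,
      -(x 0 * x 3) - x 1 * x 2] := by
  ext i; fin_cases i <;> simp [fderiv_hopf_apply, X₃] <;> field_simp <;> simp <;> ring

lemma sqrt_two_smul_hopf (x : Fin 4 → ℝ) :
    Real.sqrt 2 • hopf x = ![x 0 * x 2 + x 1 * x 3, x 1 * x 2 - x 0 * x 3,
      (x 0 ^ 2 + x 1 ^ 2 - x 2 ^ 2 - x 3 ^ 2) / 2] := by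
  ext i; fin_cases i <;> simp [hopf] <;> field_simp

noncomputable def hopfFrame (x : Fin 4 → ℝ) : Fin 3 → Fin 3 → ℝ :=
  ![fderiv ℝ hopf x (X₂ x), fderiv ℝ hopf x (X₃ x), Real.sqrt 2 • hopf x]

lemma hopfFrame_dotProduct (x : Fin 4 → ℝ) (i j : Fin 3) :
    hopfFrame x i ⬝ᵥ hopfFrame x j = if i = j then ((∑ k, x k ^ 2) / 2) ^ 2 else 0 := by
  fin_cases i <;> fin_cases j <;>
    simp [hopfFrame, fderiv_hopf_X₂, fderiv_hopf_X₃, sqrt_two_smul_hopf, dotProduct,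
      Fin.sum_univ_three, Fin.sum_univ_four] <;> ring

lemma hopfFrame_orthonormal (x : Fin 4 → ℝ) (hx : ∑ k, x k ^ 2 = 2) (i j : Fin 3) :
    hopfFrame x i ⬝ᵥ hopfFrame x j = if i = j then 1 else 0 := by
  rw [hopfFrame_dotProduct, hx]
  norm_num

/-- For every `x ∈ S³(√2)`, the images `dψₓ(X₂(x))` and `dψₓ(X₃(x))`
form an orthonormal basis of the tangent space of `S²(1/√2)` at `ψ(x)`
(the space of vectors orthogonal to `ψ(x)` in ℝ³). -/
theorem dpsi_X₂_X₃_orthonormal_basis (x : Fin 4 → ℝ) (hx : ∑ i, x i ^ 2 = 2) :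
    (∑ i, fderiv ℝ hopf x (X₂ x) i * fderiv ℝ hopf x (X₂ x) i = 1) ∧
    (∑ i, fderiv ℝ hopf x (X₃ x) i * fderiv ℝ hopf x (X₃ x) i = 1) ∧
    (∑ i, fderiv ℝ hopf x (X₂ x) i * fderiv ℝ hopf x (X₃ x) i = 0) ∧
    (∑ i, fderiv ℝ hopf x (X₂ x) i * hopf x i = 0) ∧
    (∑ i, fderiv ℝ hopf x (X₃ x) i * hopf x i = 0) ∧
    (∀ v : Fin 3 → ℝ, (∑ i, v i * hopf x i = 0) →
      ∃ a b : ℝ, v = a • fderiv ℝ hopf x (X₂ x) + b • fderiv ℝ hopf x (X₃ x)) := by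
  have hON := hopfFrame_orthonormal x hx
  have hnormal (w : Fin 3 → ℝ) : w ⬝ᵥ hopfFrame x 2 = Real.sqrt 2 * (w ⬝ᵥ hopf x) := by
    simp [hopfFrame, dotProduct_smul]
  have htangent (i : Fin 3) (hi : i ≠ 2) : hopfFrame x i ⬝ᵥ hopf x = 0 := by
    have h := hON i 2
    rw [hnormal, if_neg hi] at h
    exact (mul_eq_zero.mp h).resolve_left (by positivity)
  refine ⟨hON 0 0, hON 1 1, hON 0 1, htangent 0 (by decide), htangent 1 (by decide),
    fun v hv => ?_⟩
  have hv2 : hopfFrame x 2 ⬝ᵥ v = 0 := by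
    rw [dotProduct_comm, hnormal]
    exact mul_eq_zero_of_right _ hv
  have hdecomp := Matrix.eq_sum_dotProduct_smul_of_orthonormal (hopfFrame x) hON v
  rw [Fin.sum_univ_three, hv2, zero_smul, add_zero] at hdecomp
  exact ⟨_, _, hdecomp⟩
end

section
/- The vector fields X₄, X₅, X₆ on S³(√2) are ψ-related to the Killing fields Y₁, Y₂, Y₃ on S²(1/√2) respectively: for all x ∈ S³(√2), dψₓ(X₄(x)) = Y₁(ψ(x)), dψₓ(X₅(x)) = Y₂(ψ(x)), and dψₓ(X₆(x)) = Y₃(ψ(x)). -/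
open scoped BigOperators

noncomputable def X₄ (x : Fin 4 → ℝ) : Fin 4 → ℝ :=
  (Real.sqrt 2)⁻¹ • ![-(x 1), x 0, x 3, -(x 2)]

noncomputable def X₅ (x : Fin 4 → ℝ) : Fin 4 → ℝ :=
  (Real.sqrt 2)⁻¹ • ![-(x 2), -(x 3), x 0, x 1]

noncomputable def X₆ (x : Fin 4 → ℝ) : Fin 4 → ℝ :=
  (Real.sqrt 2)⁻¹ • ![-(x 3), x 2, -(x 1), x 0]

noncomputable def Y₁ (y : Fin 3 → ℝ) : Fin 3 → ℝ :=
  Real.sqrt 2 • ![-(y 1), y 0, 0]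

noncomputable def Y₂ (y : Fin 3 → ℝ) : Fin 3 → ℝ :=
  Real.sqrt 2 • ![y 2, 0, -(y 0)]

noncomputable def Y₃ (y : Fin 3 → ℝ) : Fin 3 → ℝ :=
  Real.sqrt 2 • ![0, -(y 2), y 1]

/-! The Hopf map is quadratic: `hopf y i = B i y y` for explicit bilinear forms `B i`, so
`dψₓ(v) i = B i x v + B i v x`. For `v = X₄ x, X₅ x, X₆ x` both sides of each relation are then
quadratic polynomials in `x`, and they coincide. -/

open ContinuousLinearMap

section QuadraticMap

variable {𝕜 E F ι : Type*} [NontriviallyNormedField 𝕜] [NormedAddCommGroup E] [NormedSpace 𝕜 E]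
  [NormedAddCommGroup F] [NormedSpace 𝕜 F]

theorem ContinuousLinearMap.hasFDerivAt_apply_self (B : E →L[𝕜] E →L[𝕜] F) (x : E) :
    HasFDerivAt (fun y => B y y) (B x + B.flip x) x := by
  refine (B.hasFDerivAt_of_bilinear (hasFDerivAt_id x) (hasFDerivAt_id x)).congr_fderiv ?_
  ext v
  simp

theorem fderiv_pi_bilinear_self_apply [Fintype ι] (B : ι → E →L[𝕜] E →L[𝕜] F) (x v : E) :
    fderiv 𝕜 (fun y i => B i y y) x v = fun i => B i x v + B i v x := by
  rw [fderiv_pi fun i => ((B i).hasFDerivAt_apply_self x).differentiableAt]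
  ext i
  simp [((B i).hasFDerivAt_apply_self x).fderiv]

end QuadraticMap

noncomputable def coordMul {n : ℕ} (i j : Fin n) : (Fin n → ℝ) →L[ℝ] (Fin n → ℝ) →L[ℝ] ℝ :=
  (mul ℝ ℝ).bilinearComp (proj i) (proj j)

@[simp]
theorem coordMul_apply {n : ℕ} (i j : Fin n) (x y : Fin n → ℝ) : coordMul i j x y = x i * y j :=
  rfl

noncomputable def hopfForm : Fin 3 → (Fin 4 → ℝ) →L[ℝ] (Fin 4 → ℝ) →L[ℝ] ℝ :=
  (1 / (2 * Real.sqrt 2)) • ![2 • (coordMul 0 2 + coordMul 1 3), 2 • (coordMul 1 2 - coordMul 0 3),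
    coordMul 0 0 + coordMul 1 1 - coordMul 2 2 - coordMul 3 3]

theorem hopf_eq_hopfForm : hopf = fun y i => hopfForm i y y := by
  ext y i
  fin_cases i <;> simp [hopf, hopfForm] <;> ring

theorem fderiv_hopf_apply_s5 (x v : Fin 4 → ℝ) :
    fderiv ℝ hopf x v = fun i => hopfForm i x v + hopfForm i v x := by
  rw [hopf_eq_hopfForm, fderiv_pi_bilinear_self_apply]

theorem X₄_X₅_X₆_psi_related_general (x : Fin 4 → ℝ) :
    fderiv ℝ hopf x (X₄ x) = Y₁ (hopf x) ∧
    fderiv ℝ hopf x (X₅ x) = Y₂ (hopf x) ∧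
    fderiv ℝ hopf x (X₆ x) = Y₃ (hopf x) := by
  simp only [fderiv_hopf_apply_s5, X₄, X₅, X₆, ← Real.sqrt_div_self]
  refine ⟨?_, ?_, ?_⟩ <;> ext i <;> fin_cases i <;> simp [hopfForm, hopf, Y₁, Y₂, Y₃] <;> ring

/-- `X₄, X₅, X₆` are ψ-related to the Killing fields `Y₁, Y₂, Y₃`:
for all `x ∈ S³(√2)`, `dψₓ(X₄(x)) = Y₁(ψ(x))`, `dψₓ(X₅(x)) = Y₂(ψ(x))`,
`dψₓ(X₆(x)) = Y₃(ψ(x))`. -/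
theorem X₄_X₅_X₆_psi_related (x : Fin 4 → ℝ) (hx : ∑ i, x i ^ 2 = 2) :
    fderiv ℝ hopf x (X₄ x) = Y₁ (hopf x) ∧
    fderiv ℝ hopf x (X₅ x) = Y₂ (hopf x) ∧
    fderiv ℝ hopf x (X₆ x) = Y₃ (hopf x) :=
  X₄_X₅_X₆_psi_related_general x
end
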